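/- arXiv:0710.1671 — 3 statements merged into one kernel-verified Lean document; each statement's English description precedes it below -/
import Mathlib

section
/- Let m ≥ 1 be an integer, let U ⊆ ℝ^{n+2} be open, and let s and l be smooth functions on U with Xl = (−n/2 − m) l on U. Then on the open set U' = {x ∈ U : Q(x) ≠ 0} one has Δ̃(s + l Q^m log|Q|) = (Δ̃s + 4m l Q^{m−1}) + (Δ̃l) Q^m log|Q|. -/
set_option linter.unnecessarySeqFocus false
set_option maxHeartbeats 1000000


open Matrix

noncomputable section

abbrev Idx (p q : ℕ) : Type := Unit ⊕ (Fin (p + q)) ⊕ Unit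

/-- The diagonal quadratic form of signature `(p,q)` on `ℝ^n`, `n = p + q`. -/
def hMat (p q : ℕ) : Matrix (Fin (p + q)) (Fin (p + q)) ℝ :=
  Matrix.diagonal fun i => if (i : ℕ) < p then (1 : ℝ) else -1

/-- The quadratic form of signature `(p+1,q+1)` on `ℝ^{n+2}`, in block form
`[[0,0,1],[0,h,0],[1,0,0]]`. -/
def htMat (p q : ℕ) : Matrix (Idx p q) (Idx p q) ℝ :=
  Matrix.of fun I J =>
    match I, J with
    | Sum.inl _, Sum.inr (Sum.inr _) => (1 : ℝ)
    | Sum.inr (Sum.inr _), Sum.inl _ => 1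
    | Sum.inr (Sum.inl i), Sum.inr (Sum.inl j) => hMat p q i j
    | _, _ => 0

/-- `Q(x) = Σ h̃_{IJ} x^I x^J`. -/
def QForm (p q : ℕ) (x : Idx p q → ℝ) : ℝ := ∑ I, ∑ J, htMat p q I J * x I * x J

/-- The partial derivative `∂_I f`. -/
def pderiv (p q : ℕ) (I : Idx p q) (f : (Idx p q → ℝ) → ℝ) : (Idx p q → ℝ) → ℝ :=
  fun x => fderiv ℝ f x (Pi.single I 1)

/-- The ambient Laplacian `Δ̃f = Σ h̃^{IJ} ∂_I ∂_J f`. -/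
def laplt (p q : ℕ) (f : (Idx p q → ℝ) → ℝ) : (Idx p q → ℝ) → ℝ :=
  fun x => ∑ I, ∑ J, (htMat p q)⁻¹ I J * pderiv p q I (pderiv p q J f) x

/-- The Euler operator `Xf = Σ x^I ∂_I f`. -/
def euler (p q : ℕ) (f : (Idx p q → ℝ) → ℝ) : (Idx p q → ℝ) → ℝ :=
  fun x => ∑ I, x I * pderiv p q I f x

/-- The null cone `N = {x ≠ 0 : Q(x) = 0}` of `h̃`. -/
def nullCone (p q : ℕ) : Set (Idx p q → ℝ) := {x | x ≠ 0 ∧ QForm p q x = 0}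

/-- A function vanishes to infinite order at `y` if its value and all iterated
derivatives of every order vanish at `y`. -/
def VanishesToInfOrderAt (p q : ℕ) (f : (Idx p q → ℝ) → ℝ) (y : Idx p q → ℝ) : Prop :=
  ∀ k : ℕ, iteratedFDeriv ℝ k f y = 0

/-- An open cone in `ℝ^{n+2} ∖ {0}`. -/
def IsOpenCone (p q : ℕ) (U : Set (Idx p q → ℝ)) : Prop :=
  IsOpen U ∧ (∀ x ∈ U, x ≠ 0) ∧ ∀ x ∈ U, ∀ l : ℝ, 0 < l → l • x ∈ U

/-- The constant `c_m` with `c_m⁻¹ = (-4)^{m-1} ((m-1)!)²`. -/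
def cConst (m : ℕ) : ℝ := ((-4 : ℝ) ^ (m - 1) * ((m - 1).factorial : ℝ) ^ 2)⁻¹

lemma htMat_symm (p q : ℕ) (I J : Idx p q) : htMat p q I J = htMat p q J I := by
  rcases I with _ | i | _ <;> rcases J with _ | j | _ <;>
    simp [htMat, hMat, Matrix.diagonal] ; rcases i with i | i <;> rcases j with j | j <;>
    simp [Matrix.diagonal_apply] <;> aesop
lemma htMat_mul_self (p q : ℕ) : htMat p q * htMat p q = 1 := by
  ext I K
  rcases I with _ | i | _ <;> rcases K with _ | k | _ <;>
    simp [Matrix.mul_apply, Fintype.sum_sum_type, htMat, hMat, Matrix.diagonal,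
      Matrix.one_apply, Finset.sum_ite_eq, ite_and] <;>
  · rcases i with i | i <;> rcases k with k | k <;>
      simp [Matrix.diagonal_apply, Finset.sum_ite_eq', ite_and] <;> aesop
lemma htMat_inv (p q : ℕ) : (htMat p q)⁻¹ = htMat p q :=
  Matrix.inv_eq_right_inv (htMat_mul_self p q)

def dQ (p q : ℕ) (K : Idx p q) (x : Idx p q → ℝ) : ℝ := 2 * ∑ J, htMat p q K J * x J
def QL (p q : ℕ) (x : Idx p q → ℝ) : (Idx p q → ℝ) →L[ℝ] ℝ :=
  ∑ K, dQ p q K x • ContinuousLinearMap.proj K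
lemma QL_apply (p q : ℕ) (x v : Idx p q → ℝ) : QL p q x v = ∑ K, dQ p q K x * v K := by
  simp [QL, ContinuousLinearMap.sum_apply]
lemma QL_single (p q : ℕ) (x : Idx p q → ℝ) (K : Idx p q) :
    QL p q x (Pi.single K 1) = dQ p q K x := by
  rw [QL_apply, Finset.sum_eq_single K]
  · simp
  · intro b _ hb; simp [Pi.single_apply, hb]
  · simp
lemma hasFDerivAt_QForm (p q : ℕ) (x : Idx p q → ℝ) :
    HasFDerivAt (QForm p q) (QL p q x) x := by
  have h : HasFDerivAt (QForm p q)
      (∑ I : Idx p q, ∑ J : Idx p q,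
        ((htMat p q I J * x I) • ContinuousLinearMap.proj J
          + x J • (htMat p q I J • (ContinuousLinearMap.proj I : (Idx p q → ℝ) →L[ℝ] ℝ)))) x := by
    apply HasFDerivAt.fun_sum
    intro I _
    apply HasFDerivAt.fun_sum
    intro J _
    have hI : HasFDerivAt (fun y : Idx p q → ℝ => y I)
        (ContinuousLinearMap.proj I : (Idx p q → ℝ) →L[ℝ] ℝ) x :=
      (ContinuousLinearMap.proj I : (Idx p q → ℝ) →L[ℝ] ℝ).hasFDerivAt
    have hJ : HasFDerivAt (fun y : Idx p q → ℝ => y J)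
        (ContinuousLinearMap.proj J : (Idx p q → ℝ) →L[ℝ] ℝ) x :=
      (ContinuousLinearMap.proj J : (Idx p q → ℝ) →L[ℝ] ℝ).hasFDerivAt
    exact (hI.const_mul (htMat p q I J)).mul hJ
  convert h using 1
  · rfl
  ext v
  simp only [QL_apply, ContinuousLinearMap.sum_apply, ContinuousLinearMap.add_apply,
    ContinuousLinearMap.smul_apply, ContinuousLinearMap.proj_apply, smul_eq_mul, dQ]
  have key : ∑ I : Idx p q, ∑ J : Idx p q, htMat p q I J * x I * v J
      = ∑ I : Idx p q, ∑ J : Idx p q, x J * (htMat p q I J * v I) := by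
    rw [Finset.sum_comm]
    refine Finset.sum_congr rfl fun I _ => Finset.sum_congr rfl fun J _ => ?_
    rw [htMat_symm p q J I]; ring
  simp only [Finset.sum_add_distrib]
  rw [key, ← two_mul, Finset.mul_sum]
  refine Finset.sum_congr rfl fun K _ => ?_
  rw [Finset.mul_sum, Finset.sum_mul, Finset.mul_sum]
  refine Finset.sum_congr rfl fun J _ => ?_
  ring

lemma sum_ht_dQ (p q : ℕ) (x : Idx p q → ℝ) (I : Idx p q) :
    ∑ J, htMat p q I J * dQ p q J x = 2 * x I := by
  simp only [dQ, Finset.mul_sum, ← mul_assoc]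
  rw [Finset.sum_comm]
  have : ∀ K, ∑ J, htMat p q I J * 2 * htMat p q J K * x K
      = (2 * (htMat p q * htMat p q) I K) * x K := by
    intro K
    rw [Matrix.mul_apply, Finset.mul_sum, Finset.sum_mul]
    refine Finset.sum_congr rfl fun J _ => by ring
  simp only [this, htMat_mul_self]
  rw [Finset.sum_eq_single I] <;> simp +contextual [Matrix.one_apply, eq_comm]

lemma sum_x_dQ (p q : ℕ) (x : Idx p q → ℝ) :
    ∑ I, x I * dQ p q I x = 2 * QForm p q x := by
  simp only [dQ, QForm, Finset.mul_sum]
  refine Finset.sum_congr rfl fun I _ => ?_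
  exact Finset.sum_congr rfl fun J _ => by ring

lemma sum_ht_sq (p q : ℕ) :
    ∑ I : Idx p q, ∑ J : Idx p q, htMat p q I J * htMat p q J I = (p + q + 2 : ℝ) := by
  have : ∀ I : Idx p q, ∑ J, htMat p q I J * htMat p q J I = (htMat p q * htMat p q) I I :=
    fun I => (Matrix.mul_apply).symm
  simp only [this, htMat_mul_self, Matrix.one_apply_eq, Finset.sum_const, Finset.card_univ]
  simp [Fintype.card_sum]
  ring
namespace Aux

lemma pderiv_hasFDerivAt {p q : ℕ} {F : (Idx p q → ℝ) → ℝ} {D : (Idx p q → ℝ) →L[ℝ] ℝ}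
    {y : Idx p q → ℝ} (h : HasFDerivAt F D y) (I : Idx p q) :
    pderiv p q I F y = D (Pi.single I 1) := by
  unfold pderiv; rw [h.fderiv]

lemma QForm_continuous (p q : ℕ) : Continuous (QForm p q) := by
  unfold QForm
  continuity

/-- linear functional giving the derivative of `dQ J` -/
def dQL (p q : ℕ) (J : Idx p q) : (Idx p q → ℝ) →L[ℝ] ℝ :=
  ∑ K, (2 * htMat p q J K) • ContinuousLinearMap.proj K

lemma dQL_apply (p q : ℕ) (J : Idx p q) (v : Idx p q → ℝ) :
    dQL p q J v = dQ p q J v := by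
  simp only [dQL, dQ, ContinuousLinearMap.sum_apply, ContinuousLinearMap.smul_apply,
    ContinuousLinearMap.proj_apply, smul_eq_mul, Finset.mul_sum]
  exact Finset.sum_congr rfl fun K _ => by ring

lemma hasFDerivAt_dQ (p q : ℕ) (J : Idx p q) (x : Idx p q → ℝ) :
    HasFDerivAt (dQ p q J) (dQL p q J) x := by
  have : dQ p q J = fun v => dQL p q J v := by funext v; rw [dQL_apply]
  rw [this]
  exact (dQL p q J).hasFDerivAt

lemma dQL_single (p q : ℕ) (J I : Idx p q) :
    dQL p q J (Pi.single I 1) = 2 * htMat p q J I := by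
  rw [dQL_apply, dQ]
  rw [Finset.sum_eq_single I]
  · simp
  · intro b _ hb; simp [Pi.single_apply, hb]
  · simp

def Gfun (m : ℕ) : ℝ → ℝ := fun t => t ^ m * Real.log t
def G1fun (m : ℕ) : ℝ → ℝ := fun t => (m : ℝ) * t ^ (m - 1) * Real.log t + t ^ (m - 1)
def G2fun (m : ℕ) : ℝ → ℝ := fun t =>
  (m : ℝ) * (((m - 1 : ℕ) : ℝ) * t ^ (m - 1 - 1) * Real.log t + t ^ (m - 1) * t⁻¹)
    + ((m - 1 : ℕ) : ℝ) * t ^ (m - 1 - 1)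

lemma hasDerivAt_Gfun (m : ℕ) (hm : 1 ≤ m) {t : ℝ} (ht : t ≠ 0) :
    HasDerivAt (Gfun m) (G1fun m t) t := by
  have h := (hasDerivAt_pow m t).mul (Real.hasDerivAt_log ht)
  unfold Gfun G1fun
  have hpow : t ^ m * t⁻¹ = t ^ (m - 1) := by
    obtain ⟨k, rfl⟩ := Nat.exists_eq_add_of_le hm
    have : 1 + k - 1 = k := by omega
    rw [this, pow_add, pow_one]
    field_simp
  convert h using 1
  exacts [rfl, rfl, rfl, by rw [hpow]]

lemma hasDerivAt_G1fun (m : ℕ) {t : ℝ} (ht : t ≠ 0) :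
    HasDerivAt (G1fun m) (G2fun m t) t := by
  have h1 := ((hasDerivAt_pow (m - 1) t).mul (Real.hasDerivAt_log ht)).const_mul (m : ℝ)
  have h2 := hasDerivAt_pow (m - 1) t
  have : G1fun m
      = fun y : ℝ => (m : ℝ) * (y ^ (m - 1) * Real.log y) + y ^ (m - 1) := by
    funext y; unfold G1fun; ring
  rw [this]
  exact h1.add h2

end Aux

/-- On `{Q ≠ 0}` one has
`Δ̃(s + l Q^m log|Q|) = (Δ̃s + 4m l Q^{m-1}) + (Δ̃l) Q^m log|Q|`,
provided `l` is homogeneous of degree `-n/2 - m`. -/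
theorem statement12 (p q : ℕ) (hn : 3 ≤ p + q)
    (m : ℕ) (hm : 1 ≤ m)
    (U : Set (Idx p q → ℝ)) (hU : IsOpen U)
    (s l : (Idx p q → ℝ) → ℝ)
    (hs : ContDiffOn ℝ (⊤ : ℕ∞) s U) (hl : ContDiffOn ℝ (⊤ : ℕ∞) l U)
    (hhom : ∀ x ∈ U, euler p q l x = (-(p + q : ℝ) / 2 - (m : ℝ)) * l x) :
    ∀ x ∈ U, QForm p q x ≠ 0 →
      laplt p q (fun y => s y + l y * QForm p q y ^ m * Real.log |QForm p q y|) x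
        = (laplt p q s x + 4 * (m : ℝ) * l x * QForm p q x ^ (m - 1))
          + laplt p q l x * QForm p q x ^ m * Real.log |QForm p q x| := by
  intro x hxU hQx
  have hFeq : (fun y => s y + l y * QForm p q y ^ m * Real.log |QForm p q y|)
      = (fun y => s y + l y * Aux.Gfun m (QForm p q y)) := by
    funext y; simp only [Aux.Gfun, Real.log_abs]; ring
  rw [hFeq, Real.log_abs]
  set V : Set (Idx p q → ℝ) := U ∩ {y | QForm p q y ≠ 0} with hVdef
  have hVopen : IsOpen V := by
    apply hU.inter
    have : {y : Idx p q → ℝ | QForm p q y ≠ 0} = QForm p q ⁻¹' ({0}ᶜ) := rfl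
    rw [this]
    exact (isOpen_compl_singleton).preimage (Aux.QForm_continuous p q)
  have hxV : x ∈ V := ⟨hxU, hQx⟩
  -- differentiability facts
  have hsd : ∀ y ∈ U, HasFDerivAt s (fderiv ℝ s y) y := fun y hy =>
    (((hs.contDiffAt (hU.mem_nhds hy)).differentiableAt (by simp))).hasFDerivAt
  have hld : ∀ y ∈ U, HasFDerivAt l (fderiv ℝ l y) y := fun y hy =>
    (((hl.contDiffAt (hU.mem_nhds hy)).differentiableAt (by simp))).hasFDerivAt
  have hpd : ∀ (f : (Idx p q → ℝ) → ℝ), ContDiffOn ℝ (⊤ : ℕ∞) f U → ∀ J : Idx p q,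
      DifferentiableAt ℝ (pderiv p q J f) x := by
    intro f hf J
    have h1 : ContDiffAt ℝ (⊤ : ℕ∞) f x := hf.contDiffAt (hU.mem_nhds hxU)
    have h2 : ContDiffAt ℝ 1 (fderiv ℝ f) x := h1.fderiv_right (WithTop.coe_le_coe.mpr le_top)
    have h3 : DifferentiableAt ℝ (fderiv ℝ f) x := h2.differentiableAt one_ne_zero
    exact h3.clm_apply (differentiableAt_const _)
  -- step 1 : first derivative on V
  have hstep1 : ∀ J : Idx p q, ∀ y ∈ V, pderiv p q J (fun y => s y + l y * Aux.Gfun m (QForm p q y)) y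
      = pderiv p q J s y + pderiv p q J l y * Aux.Gfun m (QForm p q y)
        + l y * Aux.G1fun m (QForm p q y) * dQ p q J y := by
    intro J y hy
    obtain ⟨hyU, hyQ⟩ := hy
    have hQy := hasFDerivAt_QForm p q y
    have hGQ : HasFDerivAt (fun z => Aux.Gfun m (QForm p q z))
        (Aux.G1fun m (QForm p q y) • QL p q y) y := by
      have := (Aux.hasDerivAt_Gfun m hm hyQ).comp_hasFDerivAt y hQy
      simpa [Function.comp_def] using this
    have htot := (hsd y hyU).add ((hld y hyU).mul hGQ)
    have h0 : pderiv p q J (fun y => s y + l y * Aux.Gfun m (QForm p q y)) y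
        = (fderiv ℝ s y + (l y • (Aux.G1fun m (QForm p q y) • QL p q y)
            + Aux.Gfun m (QForm p q y) • fderiv ℝ l y)) (Pi.single J 1) :=
      Aux.pderiv_hasFDerivAt htot J
    rw [h0]
    simp only [ContinuousLinearMap.add_apply, ContinuousLinearMap.smul_apply, smul_eq_mul,
      QL_single, pderiv]
    ring
  -- derivative data at x
  have hQxF := hasFDerivAt_QForm p q x
  have hGQx : HasFDerivAt (fun z => Aux.Gfun m (QForm p q z))
      (Aux.G1fun m (QForm p q x) • QL p q x) x := by
    have := (Aux.hasDerivAt_Gfun m hm hQx).comp_hasFDerivAt x hQxF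
    simpa [Function.comp_def] using this
  have hG1Qx : HasFDerivAt (fun z => Aux.G1fun m (QForm p q z))
      (Aux.G2fun m (QForm p q x) • QL p q x) x := by
    have := (Aux.hasDerivAt_G1fun m hQx).comp_hasFDerivAt x hQxF
    simpa [Function.comp_def] using this
  -- step 2+3 : second derivatives at x
  have hIJ : ∀ I J : Idx p q,
      pderiv p q I (pderiv p q J (fun y => s y + l y * Aux.Gfun m (QForm p q y))) x
      = pderiv p q I (pderiv p q J s) x
        + pderiv p q I (pderiv p q J l) x * Aux.Gfun m (QForm p q x)
        + pderiv p q J l x * (Aux.G1fun m (QForm p q x) * dQ p q I x)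
        + l x * Aux.G1fun m (QForm p q x) * (2 * htMat p q J I)
        + dQ p q J x * (l x * (Aux.G2fun m (QForm p q x) * dQ p q I x))
        + dQ p q J x * (Aux.G1fun m (QForm p q x) * pderiv p q I l x) := by
    intro I J
    have hev : pderiv p q J (fun y => s y + l y * Aux.Gfun m (QForm p q y))
        =ᶠ[nhds x] (fun y => pderiv p q J s y + pderiv p q J l y * Aux.Gfun m (QForm p q y)
          + l y * Aux.G1fun m (QForm p q y) * dQ p q J y) := by
      filter_upwards [hVopen.mem_nhds hxV] with y hy using hstep1 J y hy
    have e1 : pderiv p q I (pderiv p q J (fun y => s y + l y * Aux.Gfun m (QForm p q y))) x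
        = pderiv p q I (fun y => pderiv p q J s y + pderiv p q J l y * Aux.Gfun m (QForm p q y)
          + l y * Aux.G1fun m (QForm p q y) * dQ p q J y) x := by
      show fderiv ℝ _ x (Pi.single I 1) = fderiv ℝ _ x (Pi.single I 1)
      rw [hev.fderiv_eq]
    rw [e1]
    have hA : HasFDerivAt (pderiv p q J s) (fderiv ℝ (pderiv p q J s) x) x :=
      (hpd s hs J).hasFDerivAt
    have hB : HasFDerivAt (pderiv p q J l) (fderiv ℝ (pderiv p q J l) x) x :=
      (hpd l hl J).hasFDerivAt
    have hlx : HasFDerivAt l (fderiv ℝ l x) x := hld x hxU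
    have hdQJ := Aux.hasFDerivAt_dQ p q J x
    have htot := (hA.add (hB.mul hGQx)).add ((hlx.mul hG1Qx).mul hdQJ)
    have h0 : pderiv p q I (fun y => pderiv p q J s y
          + pderiv p q J l y * Aux.Gfun m (QForm p q y)
          + l y * Aux.G1fun m (QForm p q y) * dQ p q J y) x
        = ((fderiv ℝ (pderiv p q J s) x
            + (pderiv p q J l x • (Aux.G1fun m (QForm p q x) • QL p q x)
              + Aux.Gfun m (QForm p q x) • fderiv ℝ (pderiv p q J l) x))
          + ((l x * Aux.G1fun m (QForm p q x)) • Aux.dQL p q J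
            + dQ p q J x • (l x • (Aux.G2fun m (QForm p q x) • QL p q x)
              + Aux.G1fun m (QForm p q x) • fderiv ℝ l x))) (Pi.single I 1) :=
      Aux.pderiv_hasFDerivAt htot I
    rw [h0]
    simp only [ContinuousLinearMap.add_apply, ContinuousLinearMap.smul_apply, smul_eq_mul,
      QL_single, Aux.dQL_single, pderiv]
    ring
  -- step 4 : assemble the Laplacian
  have hlapl : laplt p q (fun y => s y + l y * Aux.Gfun m (QForm p q y)) x
      = ∑ I : Idx p q, ∑ J : Idx p q, htMat p q I J
          * pderiv p q I (pderiv p q J (fun y => s y + l y * Aux.Gfun m (QForm p q y))) x := by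
    simp only [laplt, htMat_inv]
  rw [hlapl]
  simp only [hIJ, mul_add, Finset.sum_add_distrib]
  have hT1 : ∑ I : Idx p q, ∑ J : Idx p q, htMat p q I J * pderiv p q I (pderiv p q J s) x
      = laplt p q s x := by
    simp only [laplt, htMat_inv]
  have hT3 : ∑ I : Idx p q, ∑ J : Idx p q,
        htMat p q I J * (pderiv p q I (pderiv p q J l) x * Aux.Gfun m (QForm p q x))
      = laplt p q l x * Aux.Gfun m (QForm p q x) := by
    simp only [laplt, htMat_inv, Finset.sum_mul]
    refine Finset.sum_congr rfl fun I _ => ?_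
    exact Finset.sum_congr rfl fun J _ => by ring
  have hT2 : ∑ I : Idx p q, ∑ J : Idx p q,
        htMat p q I J * (pderiv p q J l x * (Aux.G1fun m (QForm p q x) * dQ p q I x))
      = 2 * Aux.G1fun m (QForm p q x) * euler p q l x := by
    rw [Finset.sum_comm]
    have h1 : ∀ J : Idx p q, ∑ I : Idx p q,
          htMat p q I J * (pderiv p q J l x * (Aux.G1fun m (QForm p q x) * dQ p q I x))
        = (pderiv p q J l x * Aux.G1fun m (QForm p q x)) * (2 * x J) := by
      intro J
      rw [← sum_ht_dQ p q x J, Finset.mul_sum]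
      exact Finset.sum_congr rfl fun I _ => by rw [htMat_symm p q I J]; ring
    simp only [h1, euler, Finset.mul_sum]
    exact Finset.sum_congr rfl fun J _ => by ring
  have hT4 : ∑ I : Idx p q, ∑ J : Idx p q,
        htMat p q I J * (l x * Aux.G1fun m (QForm p q x) * (2 * htMat p q J I))
      = 2 * (l x * Aux.G1fun m (QForm p q x)) * ((p : ℝ) + q + 2) := by
    have h1 : ∀ I J : Idx p q, htMat p q I J * (l x * Aux.G1fun m (QForm p q x) * (2 * htMat p q J I))
        = (2 * (l x * Aux.G1fun m (QForm p q x))) * (htMat p q I J * htMat p q J I) :=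
      fun I J => by ring
    simp only [h1, ← Finset.mul_sum]
    rw [sum_ht_sq]
  have hT5 : ∑ I : Idx p q, ∑ J : Idx p q,
        htMat p q I J * (dQ p q J x * (l x * (Aux.G2fun m (QForm p q x) * dQ p q I x)))
      = 4 * QForm p q x * (l x * Aux.G2fun m (QForm p q x)) := by
    have h1 : ∀ I : Idx p q, ∑ J : Idx p q,
          htMat p q I J * (dQ p q J x * (l x * (Aux.G2fun m (QForm p q x) * dQ p q I x)))
        = (l x * Aux.G2fun m (QForm p q x)) * (dQ p q I x * (2 * x I)) := by
      intro I
      rw [← sum_ht_dQ p q x I, Finset.mul_sum, Finset.mul_sum]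
      exact Finset.sum_congr rfl fun J _ => by ring
    simp only [h1]
    have h2 : ∀ I : Idx p q, (l x * Aux.G2fun m (QForm p q x)) * (dQ p q I x * (2 * x I))
        = (2 * (l x * Aux.G2fun m (QForm p q x))) * (x I * dQ p q I x) := fun I => by ring
    simp only [h2, ← Finset.mul_sum]
    rw [sum_x_dQ]
    ring
  have hT6 : ∑ I : Idx p q, ∑ J : Idx p q,
        htMat p q I J * (dQ p q J x * (Aux.G1fun m (QForm p q x) * pderiv p q I l x))
      = 2 * Aux.G1fun m (QForm p q x) * euler p q l x := by
    have h1 : ∀ I : Idx p q, ∑ J : Idx p q,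
          htMat p q I J * (dQ p q J x * (Aux.G1fun m (QForm p q x) * pderiv p q I l x))
        = (Aux.G1fun m (QForm p q x) * pderiv p q I l x) * (2 * x I) := by
      intro I
      rw [← sum_ht_dQ p q x I, Finset.mul_sum]
      exact Finset.sum_congr rfl fun J _ => by ring
    simp only [h1, euler, Finset.mul_sum]
    exact Finset.sum_congr rfl fun I _ => by ring
  rw [hT1, hT2, hT3, hT4, hT5, hT6, hhom x hxU]
  -- final scalar identity
  have hb : ((m - 1 : ℕ) : ℝ) = (m : ℝ) - 1 := by
    rw [Nat.cast_sub hm, Nat.cast_one]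
  have hbP : ((m : ℝ) - 1) * (QForm p q x * QForm p q x ^ (m - 1 - 1))
      = ((m : ℝ) - 1) * QForm p q x ^ (m - 1) := by
    rcases eq_or_lt_of_le hm with h | h
    · rw [← h]; norm_num
    · have h3 : QForm p q x ^ (m - 1) = QForm p q x * QForm p q x ^ (m - 1 - 1) := by
        conv_lhs => rw [show m - 1 = (m - 1 - 1) + 1 from by omega]
        rw [pow_succ]; ring
      rw [h3]
  have hTT : QForm p q x * (QForm p q x)⁻¹ = 1 := mul_inv_cancel₀ hQx
  simp only [Aux.Gfun, Aux.G1fun, Aux.G2fun, hb]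
  linear_combination (4 * (m : ℝ) * l x * Real.log (QForm p q x) + 4 * l x) * hbP
    + (4 * (m : ℝ) * l x * QForm p q x ^ (m - 1)) * hTT
end
end

section
/- Suppose (R^{(r)})_{r≥0} is a sequence of multilinear forms, R^{(r)} : (ℝ^{n+2})^{4+r} → ℝ written R_{IJKL,M₁⋯M_r}, which for every r ≥ 0 satisfies: (a) R_{IJKL,M₁⋯M_r} is antisymmetric in I,J, antisymmetric in K,L, and symmetric in M₁,…,M_r; (b) R_{I[JKL],M₁⋯M_r} = 0; (c) R_{IJ[KL,M₁]M₂⋯M_r} = 0; and (d) R_{IJK0,M₁⋯M_r} = −Σ_{s=1}^{r} R_{IJKM_s,M₁⋯M̂_s⋯M_r} (interpreted as R_{IJK0} = 0 when r = 0). Then for every r ≥ 0 one has R_{IJKL,M₁⋯M_r 0} = (−2 − r) R_{IJKL,M₁⋯M_r}; that is, inserting the vector e_0 into a differentiation slot acts as multiplication by −2 − r. -/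
open Matrix

noncomputable section

/-- The distinguished index `0`, corresponding to insertion of the basis
vector `e₀`. -/
def i0 (p q : ℕ) : Idx p q := Sum.inl ()

/-!
Two facts drive the computation. The second Bianchi identity, combined with antisymmetry in the
last pair of curvature slots, lets one trade a curvature slot for a differentiation slot:
`R_{IJKL,Y N} = R_{IJKY,L N} - R_{IJLY,K N}`; by symmetry of the differentiation slots it holds
with `Y` taken from any of them. Moving `e₀` to the front of the differentiation slots and applying
this identity turns `R_{IJKL,M 0}` into two terms with `0` in a curvature slot, which relation (d)
expands. Its diagonal terms contribute `-2 R_{IJKL,M}`, and the remaining `r` pairs of terms are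
again instances of the identity, each contributing `-R_{IJKL,M}`.
-/

lemma sum_perm_fin_three_sign_mul {α : Type*} (g : α → α → α → ℝ) (a b c : α) :
    ∑ σ : Equiv.Perm (Fin 3), ((Equiv.Perm.sign σ : ℤ) : ℝ) *
        g (![a, b, c] (σ 0)) (![a, b, c] (σ 1)) (![a, b, c] (σ 2))
      = g a b c - g a c b - g b a c + g b c a + g c a b - g c b a := by
  have huniv : (Finset.univ : Finset (Equiv.Perm (Fin 3))) =
      {1, Equiv.swap 0 1, Equiv.swap 0 2, Equiv.swap 1 2,
        Equiv.swap 0 1 * Equiv.swap 1 2, Equiv.swap 1 2 * Equiv.swap 0 1} := by decide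
  rw [huniv, Finset.sum_insert (by decide), Finset.sum_insert (by decide),
    Finset.sum_insert (by decide), Finset.sum_insert (by decide),
    Finset.sum_insert (by decide), Finset.sum_singleton]
  simp only [Equiv.Perm.sign_one, Equiv.Perm.sign_mul, Equiv.Perm.sign_swap', Equiv.Perm.coe_one,
    Equiv.Perm.coe_mul, Function.comp_apply, id_eq, Equiv.swap_apply_def, Fin.reduceEq, ↓reduceIte,
    Matrix.cons_val]
  push_cast
  ring

section CurvatureTower

variable {ι : Type*} (R : (r : ℕ) → ι → ι → ι → ι → (Fin r → ι) → ℝ)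

def IsAntisymmLastPair : Prop :=
  ∀ r I J K L (M : Fin r → ι), R r I J K L M = -R r I J L K M

def IsSymmDerivSlots : Prop :=
  ∀ r I J K L (M : Fin r → ι) (σ : Equiv.Perm (Fin r)), R r I J K L (M ∘ σ) = R r I J K L M

def SatisfiesSecondBianchi : Prop :=
  ∀ r I J K L (M : Fin (r + 1) → ι),
    ∑ σ : Equiv.Perm (Fin 3), ((Equiv.Perm.sign σ : ℤ) : ℝ) *
      R (r + 1) I J (![K, L, M 0] (σ 0)) (![K, L, M 0] (σ 1))
        (Function.update M 0 (![K, L, M 0] (σ 2))) = 0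

variable {R}

lemma apply_snoc_eq_apply_cons (hsymm : IsSymmDerivSlots R) {r : ℕ} (I J K L x : ι)
    (M : Fin r → ι) :
    R (r + 1) I J K L (Fin.snoc M x) = R (r + 1) I J K L (Fin.cons x M) := by
  rw [Fin.snoc_eq_cons_rotate]
  exact hsymm _ _ _ _ _ _ _

lemma apply_cons_eq_sub (hanti : IsAntisymmLastPair R) (hbianchi : SatisfiesSecondBianchi R)
    {r : ℕ} (I J K L Y : ι) (N : Fin r → ι) :
    R (r + 1) I J K L (Fin.cons Y N)
      = R (r + 1) I J K Y (Fin.cons L N) - R (r + 1) I J L Y (Fin.cons K N) := by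
  have h := hbianchi r I J K L (Fin.cons Y N)
  rw [sum_perm_fin_three_sign_mul
    (fun a b c => R (r + 1) I J a b (Function.update (Fin.cons Y N) 0 c))] at h
  simp only [Fin.cons_zero, Fin.update_cons_zero] at h
  linarith [hanti (r + 1) I J K L (Fin.cons Y N), hanti (r + 1) I J Y K (Fin.cons L N),
    hanti (r + 1) I J Y L (Fin.cons K N)]

lemma apply_eq_sub_removeNth (hanti : IsAntisymmLastPair R) (hsymm : IsSymmDerivSlots R)
    (hbianchi : SatisfiesSecondBianchi R) {r : ℕ} (I J K L : ι) (M : Fin r → ι) (t : Fin r) :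
    R r I J K L M = R r I J K (M t) (t.succ.removeNth (Fin.cons L M : Fin (r + 1) → ι))
      - R r I J L (M t) (t.succ.removeNth (Fin.cons K M : Fin (r + 1) → ι)) := by
  obtain ⟨n, rfl⟩ := Nat.exists_eq_add_one_of_ne_zero t.pos.ne'
  have hmove : R (n + 1) I J K L M = R (n + 1) I J K L (Fin.cons (M t) (t.removeNth M)) := by
    rw [Fin.cons_removeNth_eq_comp_cycleRange_symm, hsymm]
  rw [hmove, apply_cons_eq_sub hanti hbianchi, ← Fin.cons_comp_succ_succAbove,
    ← Fin.cons_comp_succ_succAbove]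
  rfl

lemma apply_cons_eq_neg_add_sum_removeNth {e₀ : ι}
    (hd : ∀ r I J K (M : Fin (r + 1) → ι),
      R (r + 1) I J K e₀ M = -∑ s : Fin (r + 1), R r I J K (M s) (fun i => M (s.succAbove i)))
    {r : ℕ} (I J K L : ι) (M : Fin r → ι) :
    R (r + 1) I J K e₀ (Fin.cons L M) = -(R r I J K L M
      + ∑ t : Fin r, R r I J K (M t) (t.succ.removeNth (Fin.cons L M : Fin (r + 1) → ι))) := by
  rw [hd, Fin.sum_univ_succ]
  rfl

end CurvatureTower

theorem statement18_general (p q : ℕ)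
    (R : (r : ℕ) → Idx p q → Idx p q → Idx p q → Idx p q →
      (Fin r → Idx p q) → ℝ)
    (hanti2 : ∀ r I J K L (M : Fin r → Idx p q),
      R r I J K L M = -R r I J L K M)
    (hsymmM : ∀ r I J K L (M : Fin r → Idx p q) (σ : Equiv.Perm (Fin r)),
      R r I J K L (M ∘ σ) = R r I J K L M)
    (hbianchi2 : ∀ r I J K L (M : Fin (r + 1) → Idx p q),
      ∑ σ : Equiv.Perm (Fin 3),
        ((Equiv.Perm.sign σ : ℤ) : ℝ) *
          R (r + 1) I J (![K, L, M 0] (σ 0)) (![K, L, M 0] (σ 1))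
            (Function.update M 0 (![K, L, M 0] (σ 2))) = 0)
    (hd : ∀ r I J K (M : Fin (r + 1) → Idx p q),
      R (r + 1) I J K (i0 p q) M
        = -∑ s : Fin (r + 1), R r I J K (M s) (fun i => M (s.succAbove i))) :
    ∀ r I J K L (M : Fin r → Idx p q),
      R (r + 1) I J K L (Fin.snoc M (i0 p q))
        = (-2 - (r : ℝ)) * R r I J K L M := by
  intro r I J K L M
  have hcontract :
      ∑ t : Fin r, R r I J K (M t) (t.succ.removeNth (Fin.cons L M : Fin (r + 1) → Idx p q))
        - ∑ t : Fin r, R r I J L (M t) (t.succ.removeNth (Fin.cons K M : Fin (r + 1) → Idx p q))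
        = r * R r I J K L M := by
    rw [← Finset.sum_sub_distrib]
    simp [← apply_eq_sub_removeNth hanti2 hsymmM hbianchi2]
  rw [apply_snoc_eq_apply_cons hsymmM, apply_cons_eq_sub hanti2 hbianchi2,
    apply_cons_eq_neg_add_sum_removeNth hd, apply_cons_eq_neg_add_sum_removeNth hd,
    hanti2 r I J L K M]
  linear_combination -hcontract

/-- For a list of curvature-type tensors `R^{(r)}` (components
`R_{IJKL,M₁⋯M_r}`) satisfying the curvature symmetries (a), the first Bianchi
identity (b), the second Bianchi identity (c), and relation (d)
`R_{IJK0,M₁⋯M_r} = -Σ_s R_{IJKM_s,M₁⋯M̂_s⋯M_r}`, inserting `e₀` into a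
differentiation slot acts as multiplication by `-2 - r`:
`R_{IJKL,M₁⋯M_r0} = (-2-r) R_{IJKL,M₁⋯M_r}`. -/
theorem statement18 (p q : ℕ) (hn : 3 ≤ p + q)
    (R : (r : ℕ) → Idx p q → Idx p q → Idx p q → Idx p q →
      (Fin r → Idx p q) → ℝ)
    (hanti1 : ∀ r I J K L (M : Fin r → Idx p q),
      R r I J K L M = -R r J I K L M)
    (hanti2 : ∀ r I J K L (M : Fin r → Idx p q),
      R r I J K L M = -R r I J L K M)
    (hsymmM : ∀ r I J K L (M : Fin r → Idx p q) (σ : Equiv.Perm (Fin r)),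
      R r I J K L (M ∘ σ) = R r I J K L M)
    (hbianchi1 : ∀ r I J K L (M : Fin r → Idx p q),
      ∑ σ : Equiv.Perm (Fin 3),
        ((Equiv.Perm.sign σ : ℤ) : ℝ) *
          R r I (![J, K, L] (σ 0)) (![J, K, L] (σ 1)) (![J, K, L] (σ 2)) M = 0)
    (hbianchi2 : ∀ r I J K L (M : Fin (r + 1) → Idx p q),
      ∑ σ : Equiv.Perm (Fin 3),
        ((Equiv.Perm.sign σ : ℤ) : ℝ) *
          R (r + 1) I J (![K, L, M 0] (σ 0)) (![K, L, M 0] (σ 1))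
            (Function.update M 0 (![K, L, M 0] (σ 2))) = 0)
    (hd0 : ∀ I J K (M : Fin 0 → Idx p q), R 0 I J K (i0 p q) M = 0)
    (hd : ∀ r I J K (M : Fin (r + 1) → Idx p q),
      R (r + 1) I J K (i0 p q) M
        = -∑ s : Fin (r + 1), R r I J K (M s) (fun i => M (s.succAbove i))) :
    ∀ r I J K L (M : Fin r → Idx p q),
      R (r + 1) I J K L (Fin.snoc M (i0 p q))
        = (-2 - (r : ℝ)) * R r I J K L M :=
  statement18_general p q R hanti2 hsymmM hbianchi2 hd
end
end

section
/- Suppose (R^{(r)})_{r≥0} is a sequence of multilinear forms, R^{(r)} : (ℝ^{n+2})^{4+r} → ℝ written R_{IJKL,M₁⋯M_r}, which for every r ≥ 0 satisfies: (a) R_{IJKL,M₁⋯M_r} is antisymmetric in I,J, antisymmetric in K,L, and symmetric in M₁,…,M_r; (b) R_{I[JKL],M₁⋯M_r} = 0; (c) R_{IJ[KL,M₁]M₂⋯M_r} = 0; (d) R_{IJK0,M₁⋯M_r} = −Σ_{s=1}^{r} R_{IJKM_s,M₁⋯M̂_s⋯M_r} (interpreted as R_{IJK0} = 0 when r = 0);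 and (e) Σ_{I,K} h̃^{IK} R_{IJKL,M₁⋯M_r} = 0 (trace-freeness). Then the divergence and Laplace relations hold at the jet level: for every r ≥ 1, Σ_{L,M₁} h̃^{L M₁} R_{IJKL,M₁M₂⋯M_r} = 0, and for every r ≥ 2, Σ_{M₁,M₂} h̃^{M₁M₂} R_{IJKL,M₁M₂M₃⋯M_r} = 0. -/
open Matrix

noncomputable section

/-! Contracting the second Bianchi identity in the form
`R_{IJAB,K} = R_{IJKB,A} - R_{IJKA,B}` over `I, K` shows, by trace-freeness, that contracting the
first curvature slot with a derivative slot gives zero. The pair symmetry `R_{IJKL} = R_{KLIJ}`,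
which follows from the first Bianchi identity, turns this into the divergence identity. The second
Bianchi identity in the slots `K, L, M₁`, together with the symmetry of the derivative slots,
writes the Laplacian as a difference of two divergences. -/

open Equiv

section CurvatureSymmetries

variable {𝕜 ι : Type*}

theorem sum_perm_fin_three_sign_mul_s19 [CommRing 𝕜] (g : Fin 3 → Fin 3 → Fin 3 → 𝕜) :
    ∑ σ : Perm (Fin 3), ((Perm.sign σ : ℤ) : 𝕜) * g (σ 0) (σ 1) (σ 2) =
      g 0 1 2 - g 1 0 2 - g 2 1 0 - g 0 2 1 + g 1 2 0 + g 2 0 1 := by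
  have huniv : (Finset.univ : Finset (Perm (Fin 3))) =
      {1, swap 0 1, swap 0 2, swap 1 2, swap 0 1 * swap 1 2, swap 1 2 * swap 0 1} := by
    decide
  rw [huniv, Finset.sum_insert (by decide), Finset.sum_insert (by decide),
    Finset.sum_insert (by decide), Finset.sum_insert (by decide),
    Finset.sum_insert (by decide), Finset.sum_singleton]
  simp only [Perm.sign_one, Perm.sign_swap', Perm.sign_mul, Perm.coe_one, Perm.coe_mul,
    Function.comp_apply, id_eq, swap_apply_left, swap_apply_right, swap_apply_def, Fin.reduceEq,
    zero_ne_one, one_ne_zero, ↓reduceIte, Units.val_one, Units.val_neg, Int.reduceNeg, Int.cast_one,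
    Int.cast_neg, Units.val_mul, Int.cast_mul]
  ring

variable [Field 𝕜] [CharZero 𝕜]

theorem cyclic_sum_eq_zero_of_first_bianchi (T : ι → ι → ι → 𝕜)
    (hT : ∀ J K L, T J K L = -T J L K) (J K L : ι)
    (h : ∑ σ : Perm (Fin 3), ((Perm.sign σ : ℤ) : 𝕜) *
      T (![J, K, L] (σ 0)) (![J, K, L] (σ 1)) (![J, K, L] (σ 2)) = 0) :
    T J K L + T K L J + T L J K = 0 := by
  rw [sum_perm_fin_three_sign_mul_s19 (fun a b c => T (![J, K, L] a) (![J, K, L] b) (![J, K, L] c))]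
    at h
  have h2 : (2 : 𝕜) * (T J K L + T K L J + T L J K) = 0 := by
    simp only [Matrix.cons_val_zero, Matrix.cons_val_one, Matrix.cons_val_two, Matrix.tail_cons,
      Matrix.head_cons] at h
    linear_combination h + hT J K L + hT K L J + hT L J K
  simpa using h2

theorem cyclic_sum_eq_zero_of_second_bianchi {r : ℕ} (S : ι → ι → (Fin (r + 1) → ι) → 𝕜)
    (hS : ∀ K L M, S K L M = -S L K M) (K L : ι) (M : Fin (r + 1) → ι)
    (h : ∑ σ : Perm (Fin 3), ((Perm.sign σ : ℤ) : 𝕜) *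
      S (![K, L, M 0] (σ 0)) (![K, L, M 0] (σ 1)) (Function.update M 0 (![K, L, M 0] (σ 2))) = 0) :
    S K L M + S L (M 0) (Function.update M 0 K) + S (M 0) K (Function.update M 0 L) = 0 := by
  rw [sum_perm_fin_three_sign_mul_s19
    (fun a b c => S (![K, L, M 0] a) (![K, L, M 0] b) (Function.update M 0 (![K, L, M 0] c)))] at h
  have h2 : (2 : 𝕜) * (S K L M + S L (M 0) (Function.update M 0 K)
      + S (M 0) K (Function.update M 0 L)) = 0 := by
    simp only [Matrix.cons_val_zero, Matrix.cons_val_one, Matrix.cons_val_two, Matrix.tail_cons,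
      Matrix.head_cons, Function.update_eq_self] at h
    linear_combination h + hS K L M + hS L (M 0) (Function.update M 0 K)
      + hS (M 0) K (Function.update M 0 L)
  simpa using h2

theorem pair_symm_of_cyclic_sum_eq_zero (T : ι → ι → ι → ι → 𝕜)
    (h1 : ∀ a b c d, T a b c d = -T b a c d) (h2 : ∀ a b c d, T a b c d = -T a b d c)
    (hcyc : ∀ a b c d, T a b c d + T a c d b + T a d b c = 0) (I J K L : ι) :
    T I J K L = T K L I J := by
  linear_combination (2 : 𝕜)⁻¹ * (hcyc I J K L - hcyc J K L I - hcyc K L I J + hcyc L I J K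
    + h1 I J K L - h1 L K I J - h2 I K L J + h1 K I J L - h1 L I J K + h1 J K L I
    + h2 J L K I - h1 L J K I)

end CurvatureSymmetries

theorem Fin.apply_cons_cons_comm {α β : Type*} {r : ℕ} (F : (Fin (r + 2) → α) → β)
    (hF : ∀ (M : Fin (r + 2) → α) (σ : Perm (Fin (r + 2))), F (M ∘ σ) = F M)
    (a b : α) (N : Fin r → α) :
    F (Fin.cons a (Fin.cons b N)) = F (Fin.cons b (Fin.cons a N)) := by
  rw [← hF _ (swap 0 1)]
  exact congrArg F (Matrix.cons_cons_comp_swap_zero_one a b N)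

section Jets

variable {ι 𝕜 : Type*} [Fintype ι] [CommRing 𝕜]
  {R : (r : ℕ) → ι → ι → ι → ι → (Fin r → ι) → 𝕜} {G : Matrix ι ι 𝕜}

theorem sum_contract_first_curvature_first_deriv_eq_zero
    (hanti2 : ∀ r I J K L M, R r I J K L M = -R r I J L K M)
    (hcyc2 : ∀ r I J K L m (N : Fin r → ι), R (r + 1) I J K L (Fin.cons m N)
      + R (r + 1) I J L m (Fin.cons K N) + R (r + 1) I J m K (Fin.cons L N) = 0)
    (htrfree : ∀ r J L M, ∑ I, ∑ K, G I K * R r I J K L M = 0)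
    (r : ℕ) (J A B : ι) (N : Fin r → ι) :
    ∑ I, ∑ K, G I K * R (r + 1) I J A B (Fin.cons K N) = 0 := by
  have hterm : ∀ I K, G I K * R (r + 1) I J A B (Fin.cons K N) =
      G I K * R (r + 1) I J K B (Fin.cons A N) - G I K * R (r + 1) I J K A (Fin.cons B N) := by
    intro I K
    linear_combination G I K * (hcyc2 r I J A B K N - hanti2 (r + 1) I J B K (Fin.cons A N))
  simp only [hterm, Finset.sum_sub_distrib, htrfree, sub_zero]

theorem sum_divergence_eq_zero
    (hanti1 : ∀ r I J K L M, R r I J K L M = -R r J I K L M)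
    (hpair : ∀ r I J K L M, R r I J K L M = R r K L I J M)
    (hcontr : ∀ r J A B (N : Fin r → ι),
      ∑ I, ∑ K, G I K * R (r + 1) I J A B (Fin.cons K N) = 0)
    (r : ℕ) (I J K : ι) (M : Fin r → ι) :
    ∑ L, ∑ M₁, G L M₁ * R (r + 1) I J K L (Fin.cons M₁ M) = 0 := by
  have hterm : ∀ L M₁, G L M₁ * R (r + 1) I J K L (Fin.cons M₁ M) =
      -(G L M₁ * R (r + 1) L K I J (Fin.cons M₁ M)) := by
    intro L M₁
    rw [hpair, hanti1, mul_neg]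
  simp only [hterm, Finset.sum_neg_distrib, hcontr, neg_zero]

theorem sum_laplacian_eq_zero
    (hanti2 : ∀ r I J K L M, R r I J K L M = -R r I J L K M)
    (hsymmM : ∀ r I J K L (M : Fin r → ι) (σ : Perm (Fin r)), R r I J K L (M ∘ σ) = R r I J K L M)
    (hcyc2 : ∀ r I J K L m (N : Fin r → ι), R (r + 1) I J K L (Fin.cons m N)
      + R (r + 1) I J L m (Fin.cons K N) + R (r + 1) I J m K (Fin.cons L N) = 0)
    (hdiv : ∀ r I J K (M : Fin r → ι), ∑ L, ∑ M₁, G L M₁ * R (r + 1) I J K L (Fin.cons M₁ M) = 0)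
    (r : ℕ) (I J K L : ι) (M : Fin r → ι) :
    ∑ M₁, ∑ M₂, G M₁ M₂ * R (r + 2) I J K L (Fin.cons M₁ (Fin.cons M₂ M)) = 0 := by
  have hswap := fun K L a b N =>
    Fin.apply_cons_cons_comm (R (r + 2) I J K L) (hsymmM _ I J K L) a b N
  have hterm : ∀ M₁ M₂, G M₁ M₂ * R (r + 2) I J K L (Fin.cons M₁ (Fin.cons M₂ M)) =
      G M₁ M₂ * R (r + 2) I J K M₁ (Fin.cons M₂ (Fin.cons L M))
        - G M₁ M₂ * R (r + 2) I J L M₁ (Fin.cons M₂ (Fin.cons K M)) := by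
    intro M₁ M₂
    linear_combination G M₁ M₂ * (hcyc2 (r + 1) I J K L M₁ (Fin.cons M₂ M)
      - hanti2 (r + 2) I J M₁ K (Fin.cons L (Fin.cons M₂ M))
      - hswap L M₁ K M₂ M + hswap K M₁ L M₂ M)
  simp only [hterm, Finset.sum_sub_distrib, hdiv, sub_zero]

end Jets

theorem statement19_general (p q : ℕ)
    (R : (r : ℕ) → Idx p q → Idx p q → Idx p q → Idx p q →
      (Fin r → Idx p q) → ℝ)
    (hanti1 : ∀ r I J K L (M : Fin r → Idx p q),
      R r I J K L M = -R r J I K L M)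
    (hanti2 : ∀ r I J K L (M : Fin r → Idx p q),
      R r I J K L M = -R r I J L K M)
    (hsymmM : ∀ r I J K L (M : Fin r → Idx p q) (σ : Equiv.Perm (Fin r)),
      R r I J K L (M ∘ σ) = R r I J K L M)
    (hbianchi1 : ∀ r I J K L (M : Fin r → Idx p q),
      ∑ σ : Equiv.Perm (Fin 3),
        ((Equiv.Perm.sign σ : ℤ) : ℝ) *
          R r I (![J, K, L] (σ 0)) (![J, K, L] (σ 1)) (![J, K, L] (σ 2)) M = 0)
    (hbianchi2 : ∀ r I J K L (M : Fin (r + 1) → Idx p q),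
      ∑ σ : Equiv.Perm (Fin 3),
        ((Equiv.Perm.sign σ : ℤ) : ℝ) *
          R (r + 1) I J (![K, L, M 0] (σ 0)) (![K, L, M 0] (σ 1))
            (Function.update M 0 (![K, L, M 0] (σ 2))) = 0)
    (htrfree : ∀ r J L (M : Fin r → Idx p q),
      ∑ I, ∑ K, (htMat p q)⁻¹ I K * R r I J K L M = 0) :
    (∀ r I J K (M : Fin r → Idx p q),
      ∑ L, ∑ M₁, (htMat p q)⁻¹ L M₁ * R (r + 1) I J K L (Fin.cons M₁ M) = 0) ∧
    (∀ r I J K L (M : Fin r → Idx p q),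
      ∑ M₁, ∑ M₂, (htMat p q)⁻¹ M₁ M₂ *
        R (r + 2) I J K L (Fin.cons M₁ (Fin.cons M₂ M)) = 0) := by
  have hpair : ∀ r I J K L M, R r I J K L M = R r K L I J M := fun r I J K L M =>
    pair_symm_of_cyclic_sum_eq_zero (R r · · · · M) (hanti1 r · · · · M) (hanti2 r · · · · M)
      (fun a b c d => cyclic_sum_eq_zero_of_first_bianchi (R r a · · · M) (hanti2 r a · · · M)
        b c d (hbianchi1 r a b c d M)) I J K L
  have hcyc2 : ∀ r I J K L m (N : Fin r → Idx p q), R (r + 1) I J K L (Fin.cons m N)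
      + R (r + 1) I J L m (Fin.cons K N) + R (r + 1) I J m K (Fin.cons L N) = 0 := by
    intro r I J K L m N
    simpa only [Fin.cons_zero, Fin.update_cons_zero] using
      cyclic_sum_eq_zero_of_second_bianchi (R (r + 1) I J) (hanti2 (r + 1) I J) K L
        (Fin.cons m N) (hbianchi2 r I J K L (Fin.cons m N))
  have hdiv := sum_divergence_eq_zero hanti1 hpair
    (sum_contract_first_curvature_first_deriv_eq_zero hanti2 hcyc2 htrfree)
  exact ⟨hdiv, sum_laplacian_eq_zero hanti2 hsymmM hcyc2 hdiv⟩

/-- For a list of curvature-type tensors `R^{(r)}` satisfying the curvature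
symmetries (a), the Bianchi identities (b), (c), relation (d), and
trace-freeness (e) `Σ h̃^{IK} R_{IJKL,M₁⋯M_r} = 0`, the divergence and Laplace
relations hold at the jet level:
`Σ h̃^{LM₁} R_{IJKL,M₁M₂⋯M_r} = 0` for `r ≥ 1`, and
`Σ h̃^{M₁M₂} R_{IJKL,M₁M₂M₃⋯M_r} = 0` for `r ≥ 2`. -/
theorem statement19 (p q : ℕ) (hn : 3 ≤ p + q)
    (R : (r : ℕ) → Idx p q → Idx p q → Idx p q → Idx p q →
      (Fin r → Idx p q) → ℝ)
    (hanti1 : ∀ r I J K L (M : Fin r → Idx p q),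
      R r I J K L M = -R r J I K L M)
    (hanti2 : ∀ r I J K L (M : Fin r → Idx p q),
      R r I J K L M = -R r I J L K M)
    (hsymmM : ∀ r I J K L (M : Fin r → Idx p q) (σ : Equiv.Perm (Fin r)),
      R r I J K L (M ∘ σ) = R r I J K L M)
    (hbianchi1 : ∀ r I J K L (M : Fin r → Idx p q),
      ∑ σ : Equiv.Perm (Fin 3),
        ((Equiv.Perm.sign σ : ℤ) : ℝ) *
          R r I (![J, K, L] (σ 0)) (![J, K, L] (σ 1)) (![J, K, L] (σ 2)) M = 0)
    (hbianchi2 : ∀ r I J K L (M : Fin (r + 1) → Idx p q),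
      ∑ σ : Equiv.Perm (Fin 3),
        ((Equiv.Perm.sign σ : ℤ) : ℝ) *
          R (r + 1) I J (![K, L, M 0] (σ 0)) (![K, L, M 0] (σ 1))
            (Function.update M 0 (![K, L, M 0] (σ 2))) = 0)
    (hd0 : ∀ I J K (M : Fin 0 → Idx p q), R 0 I J K (i0 p q) M = 0)
    (hd : ∀ r I J K (M : Fin (r + 1) → Idx p q),
      R (r + 1) I J K (i0 p q) M
        = -∑ s : Fin (r + 1), R r I J K (M s) (fun i => M (s.succAbove i)))
    (htrfree : ∀ r J L (M : Fin r → Idx p q),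
      ∑ I, ∑ K, (htMat p q)⁻¹ I K * R r I J K L M = 0) :
    (∀ r I J K (M : Fin r → Idx p q),
      ∑ L, ∑ M₁, (htMat p q)⁻¹ L M₁ * R (r + 1) I J K L (Fin.cons M₁ M) = 0) ∧
    (∀ r I J K L (M : Fin r → Idx p q),
      ∑ M₁, ∑ M₂, (htMat p q)⁻¹ M₁ M₂ *
        R (r + 2) I J K L (Fin.cons M₁ (Fin.cons M₂ M)) = 0) :=
  statement19_general p q R hanti1 hanti2 hsymmM hbianchi1 hbianchi2 htrfree
end
end
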